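/- arXiv:2508.11493 — 5 statements merged into one kernel-verified Lean document; each statement's English description precedes it below -/
import Mathlib

section
/- Let P = (Σ, s₀, g) be a probabilistic planning problem with Σ = (S, A, γ, Pr), and let P̂ = (Σ̂, s₀, g) be the classical planning problem whose domain Σ̂ is the all-outcomes determinization of Σ. If a condition φ is a landmark for P̂, then φ is a landmark for P. -/
/-- A probabilistic planning domain: `γ` gives the set of possible successor
states, `pr` the transition probabilities (a distribution over `γ s a`
whenever `a` is applicable in `s`, i.e. `γ s a ≠ ∅`). -/
structure ProbDomain (S A : Type*) where
  γ : S → A → Finset S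
  pr : S → A → S → ℝ
  pr_nonneg : ∀ s a s', s' ∈ γ s a → 0 ≤ pr s a s'
  pr_sum : ∀ s a, (γ s a).Nonempty → ∑ s' ∈ γ s a, pr s a s' = 1

/-- A policy: a partial function from states to actions, mapping each state in
its domain to an action applicable there. -/
structure Policy {S A : Type*} (D : ProbDomain S A) where
  act : S → Option A
  applicable : ∀ s a, act s = some a → (D.γ s a).Nonempty

/-- `σ` is a history of policy `pol` from `s0` (w.r.t. goal `g`):
a nonempty finite sequence starting at `s0`, following transitions allowed by
`γ` and `pol`, and such that a position is final iff the state there satisfies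
`g` or is outside the domain of the policy. -/
def IsHistory {S A : Type*} (D : ProbDomain S A) (pol : Policy D)
    (s0 : S) (g : S → Prop) (σ : List S) : Prop :=
  1 ≤ σ.length ∧ σ.getD 0 s0 = s0 ∧
  (∀ i, i + 1 < σ.length →
    ∃ a, pol.act (σ.getD i s0) = some a ∧
      σ.getD (i + 1) s0 ∈ D.γ (σ.getD i s0) a) ∧
  (∀ i, i < σ.length →
    ((g (σ.getD i s0) ∨ pol.act (σ.getD i s0) = none) ↔ i = σ.length - 1))

/-- Membership in `H(s0, pol, g)`: a history of `pol` from `s0` whose final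
state satisfies `g`. -/
def InGoalHistories {S A : Type*} (D : ProbDomain S A) (pol : Policy D)
    (s0 : S) (g : S → Prop) (σ : List S) : Prop :=
  IsHistory D pol s0 g σ ∧ g (σ.getD (σ.length - 1) s0)

/-- A classical (deterministic) planning domain: `δ` is a partial
deterministic transition function. -/
structure ClassDomain (S B : Type*) where
  δ : S → B → Option S

/-- `execPlan Dh s plan` is the state obtained by applying the actions of the
plan in order starting from `s`, when every action in turn is applicable. -/
def execPlan {S B : Type*} (Dh : ClassDomain S B) : S → List B → Option S
  | s, [] => some s
  | s, b :: rest => (Dh.δ s b).bind fun s' => execPlan Dh s' rest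

/-- A plan solves the classical problem `(Dh, s0, g)` if executing it from
`s0` is defined and reaches a state satisfying `g`. -/
def SolvesClass {S B : Type*} (Dh : ClassDomain S B) (s0 : S) (g : S → Prop)
    (plan : List B) : Prop :=
  ∃ s, execPlan Dh s0 plan = some s ∧ g s

/-- The condition `φ` is true at time `i` in the plan `plan` from `s0`. -/
def TrueAt {S B : Type*} (Dh : ClassDomain S B) (s0 : S) (φ : S → Prop)
    (plan : List B) (i : ℕ) : Prop :=
  ∃ s, execPlan Dh s0 (plan.take i) = some s ∧ φ s

/-- `φ` is a landmark for the classical problem `(Dh, s0, g)`: it is true at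
some time in every solution plan. -/
def ClassLandmark {S B : Type*} (Dh : ClassDomain S B) (s0 : S)
    (g φ : S → Prop) : Prop :=
  ∀ plan : List B, SolvesClass Dh s0 g plan →
    ∃ i ≤ plan.length, TrueAt Dh s0 φ plan i

/-- `Dh` is an all-outcomes determinization of `D`: every possible outcome of
every applicable probabilistic action is realized by some deterministic
action, and conversely every deterministic transition comes from an outcome of
some probabilistic action. -/
def IsAllOutcomes {S A B : Type*} (D : ProbDomain S A)
    (Dh : ClassDomain S B) : Prop :=
  (∀ s a s', s' ∈ D.γ s a → ∃ b, Dh.δ s b = some s') ∧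
  (∀ s b s', Dh.δ s b = some s' → ∃ a, s' ∈ D.γ s a)

/-- `φ` is a landmark for the probabilistic problem `(D, s0, g)`: for every
policy and every history in `H(s0, π, g)`, `φ` is true at some time. -/
def ProbLandmark {S A : Type*} (D : ProbDomain S A) (s0 : S)
    (g φ : S → Prop) : Prop :=
  ∀ (pol : Policy D) (σ : List S), InGoalHistories D pol s0 g σ →
    ∃ i < σ.length, φ (σ.getD i s0)

/-! A goal history of any policy is a sequence of states in which every step is an outcome
of some action, so under the all-outcomes determinization it is traced by a plan that solves
the classical problem; the classical landmark is then met at one of the history's states. -/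

theorem ClassDomain.exists_plan_execPlan_take_eq {S B : Type*} (Dh : ClassDomain S B) :
    ∀ (n : ℕ) (f : ℕ → S), (∀ j < n, ∃ b, Dh.δ (f j) b = some (f (j + 1))) →
      ∃ plan : List B, plan.length = n ∧
        ∀ i ≤ n, execPlan Dh (f 0) (plan.take i) = some (f i)
  | 0, f, _ => ⟨[], rfl, fun i hi => by simp [Nat.le_zero.mp hi, execPlan]⟩
  | n + 1, f, hstep => by
    obtain ⟨b, hb⟩ := hstep 0 n.succ_pos
    obtain ⟨plan, hlen, hexec⟩ := Dh.exists_plan_execPlan_take_eq n (fun j => f (j + 1))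
      fun j hj => hstep (j + 1) (Nat.succ_lt_succ hj)
    refine ⟨b :: plan, by simp [hlen], fun i hi => ?_⟩
    cases i with
    | zero => rfl
    | succ i => simpa [execPlan, hb] using hexec i (Nat.le_of_succ_le_succ hi)

theorem IsHistory.exists_plan_execPlan_take_eq {S A B : Type*} {D : ProbDomain S A}
    {Dh : ClassDomain S B} (hdet : IsAllOutcomes D Dh) {pol : Policy D} {s0 : S}
    {g : S → Prop} {σ : List S} (hσ : IsHistory D pol s0 g σ) :
    ∃ plan : List B, plan.length = σ.length - 1 ∧
      ∀ i ≤ σ.length - 1, execPlan Dh s0 (plan.take i) = some (σ.getD i s0) := by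
  obtain ⟨-, hstart, hstep, -⟩ := hσ
  have hrealized : ∀ j < σ.length - 1,
      ∃ b, Dh.δ (σ.getD j s0) b = some (σ.getD (j + 1) s0) := fun j hj => by
    obtain ⟨a, -, hmem⟩ := hstep j (by omega)
    exact hdet.1 _ a _ hmem
  simpa only [hstart] using Dh.exists_plan_execPlan_take_eq _ _ hrealized

theorem landmark_of_determinization_general {S A B : Type*}
    (D : ProbDomain S A) (Dh : ClassDomain S B) (hdet : IsAllOutcomes D Dh)
    (s0 : S) (g φ : S → Prop) (hlm : ClassLandmark Dh s0 g φ) :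
    ProbLandmark D s0 g φ := by
  intro pol σ ⟨hσ, hgoal⟩
  obtain ⟨plan, hlen, hexec⟩ := hσ.exists_plan_execPlan_take_eq hdet
  have hsolves : SolvesClass Dh s0 g plan :=
    ⟨_, by simpa only [← hlen, List.take_length] using hexec _ hlen.le, hgoal⟩
  obtain ⟨i, hi, s, hs, hφ⟩ := hlm plan hsolves
  rw [hlen] at hi
  rw [hexec i hi, Option.some_inj] at hs
  exact ⟨i, by have := hσ.1; omega, hs ▸ hφ⟩

/-- If `φ` is a landmark for the all-outcomes
determinization of a probabilistic planning problem, then `φ` is a landmark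
for the probabilistic problem itself. -/
theorem landmark_of_determinization {S A B : Type*}
    [Fintype S] [Fintype A] [Fintype B]
    (D : ProbDomain S A) (Dh : ClassDomain S B) (hdet : IsAllOutcomes D Dh)
    (s0 : S) (g φ : S → Prop) (hlm : ClassLandmark Dh s0 g φ) :
    ProbLandmark D s0 g φ :=
  landmark_of_determinization_general D Dh hdet s0 g φ hlm
end

section
/- Let P = (Σ, s₀, g) be a probabilistic planning problem with Σ = (S, A, γ, Pr), and let P̂ = (Σ̂, s₀, g) be the classical planning problem whose domain Σ̂ is the all-outcomes determinization of Σ. Let φ₁ and φ₂ be conditions. If there is a natural ordering φ₁ → φ₂ in P̂ (for all i, in every solution plan of P̂ in which φ₂ is true at time i, φ₁ is true at some time j < i), then there is a natural ordering φ₁ → φ₂ in P (for all i, for every policy π and every history σ ∈ H(s₀, π, g) in which φ₂ is true at time i, φ₁ is true at some time j < i). -/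
/-- Natural ordering `φ1 → φ2` in the classical problem: for all `i`, in
every solution plan in which `φ2` is true at time `i`, `φ1` is true at some
time `j < i`. -/
def ClassNaturalOrder {S B : Type*} (Dh : ClassDomain S B) (s0 : S)
    (g φ1 φ2 : S → Prop) : Prop :=
  ∀ plan : List B, SolvesClass Dh s0 g plan →
    ∀ i ≤ plan.length, TrueAt Dh s0 φ2 plan i →
      ∃ j < i, TrueAt Dh s0 φ1 plan j

/-- Natural ordering `φ1 → φ2` in the probabilistic problem: for all `i`,
for every policy and every history in `H(s0, π, g)` in which `φ2` is true at
time `i`, `φ1` is true at some time `j < i`. -/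
def ProbNaturalOrder {S A : Type*} (D : ProbDomain S A) (s0 : S)
    (g φ1 φ2 : S → Prop) : Prop :=
  ∀ (pol : Policy D) (σ : List S), InGoalHistories D pol s0 g σ →
    ∀ i < σ.length, φ2 (σ.getD i s0) → ∃ j < i, φ1 (σ.getD j s0)


/-!
Every step of a history is an outcome of an action applicable in the current state, so the
all-outcomes determinization has a deterministic action realizing it. Hence every history in
`H(s₀, π, g)` is the state sequence of a solution plan of the determinization, visiting the same
state at each time, and the classical natural ordering transfers to the history.
-/

namespace ProbDomain

variable {S A : Type*}

def Succ (D : ProbDomain S A) (s s' : S) : Prop := ∃ a, s' ∈ D.γ s a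

end ProbDomain

namespace ClassDomain

variable {S B : Type*}

def Succ (Dh : ClassDomain S B) (s s' : S) : Prop := ∃ b, Dh.δ s b = some s'

theorem exists_plan_of_isChain (Dh : ClassDomain S B) {s : S} {l : List S}
    (hl : (s :: l).IsChain Dh.Succ) :
    ∃ plan : List B, plan.length = l.length ∧
      ∀ i ≤ l.length, execPlan Dh s (plan.take i) = (s :: l)[i]? := by
  induction l generalizing s with
  | nil => exact ⟨[], rfl, fun i hi => by simp_all [execPlan]⟩
  | cons s' l ih =>
    obtain ⟨⟨b, hb⟩, hl⟩ := List.isChain_cons_cons.mp hl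
    obtain ⟨plan, hlen, hexec⟩ := ih hl
    refine ⟨b :: plan, by simp [hlen], fun i hi => ?_⟩
    cases i with
    | zero => rfl
    | succ i => simpa [execPlan, hb] using hexec i (by simpa using hi)

theorem trueAt_length_iff (Dh : ClassDomain S B) (s0 : S) (g : S → Prop) (plan : List B) :
    TrueAt Dh s0 g plan plan.length ↔ SolvesClass Dh s0 g plan := by
  simp [TrueAt, SolvesClass]

end ClassDomain

section History

variable {S A B : Type*} {D : ProbDomain S A} {pol : Policy D} {s0 : S} {g : S → Prop}
  {σ : List S}

theorem IsHistory.isChain (hσ : IsHistory D pol s0 g σ) : σ.IsChain D.Succ := by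
  refine List.isChain_iff_getElem.mpr fun i hi => ?_
  obtain ⟨a, -, ha⟩ := hσ.2.2.1 i hi
  refine ⟨a, ?_⟩
  simpa [List.getD_eq_getElem, hi, Nat.lt_of_succ_lt hi] using ha

theorem IsHistory.exists_eq_cons (hσ : IsHistory D pol s0 g σ) : ∃ l, σ = s0 :: l := by
  obtain ⟨hlen, h0, -⟩ := hσ
  match σ, hlen with
  | s :: l, _ => exact ⟨l, by simpa using h0⟩

theorem IsAllOutcomes.succ {Dh : ClassDomain S B} (hdet : IsAllOutcomes D Dh) {s s' : S}
    (h : D.Succ s s') : Dh.Succ s s' :=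
  let ⟨a, ha⟩ := h
  hdet.1 s a s' ha

theorem IsHistory.exists_plan {Dh : ClassDomain S B} (hdet : IsAllOutcomes D Dh)
    (hσ : IsHistory D pol s0 g σ) :
    ∃ plan : List B, plan.length + 1 = σ.length ∧
      ∀ i < σ.length, ∀ φ : S → Prop, TrueAt Dh s0 φ plan i ↔ φ (σ.getD i s0) := by
  obtain ⟨l, rfl⟩ := hσ.exists_eq_cons
  obtain ⟨plan, hlen, hexec⟩ := Dh.exists_plan_of_isChain (hσ.isChain.imp fun _ _ => hdet.succ)
  refine ⟨plan, by simp [hlen], fun i hi φ => ?_⟩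
  simp [TrueAt, hexec i (by simpa using Nat.le_of_lt_succ hi), List.getElem?_eq_getElem hi]

end History

theorem natural_order_of_determinization_general {S A B : Type*}
    (D : ProbDomain S A) (Dh : ClassDomain S B) (hdet : IsAllOutcomes D Dh)
    (s0 : S) (g φ1 φ2 : S → Prop)
    (hord : ClassNaturalOrder Dh s0 g φ1 φ2) :
    ProbNaturalOrder D s0 g φ1 φ2 := by
  intro pol σ ⟨hσ, hg⟩ i hi hφ2
  obtain ⟨plan, hlen, htrue⟩ := hσ.exists_plan hdet
  have hsolves : SolvesClass Dh s0 g plan := by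
    rwa [← Dh.trueAt_length_iff, htrue _ (by omega), show plan.length = σ.length - 1 by omega]
  obtain ⟨j, hj, hφ1⟩ := hord plan hsolves i (by omega) ((htrue i hi φ2).2 hφ2)
  exact ⟨j, hj, (htrue j (by omega) φ1).1 hφ1⟩

/-- A natural ordering in the all-outcomes determinization
carries over to the probabilistic problem. -/
theorem natural_order_of_determinization {S A B : Type*}
    [Fintype S] [Fintype A] [Fintype B]
    (D : ProbDomain S A) (Dh : ClassDomain S B) (hdet : IsAllOutcomes D Dh)
    (s0 : S) (g φ1 φ2 : S → Prop)
    (hord : ClassNaturalOrder Dh s0 g φ1 φ2) :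
    ProbNaturalOrder D s0 g φ1 φ2 :=
  natural_order_of_determinization_general D Dh hdet s0 g φ1 φ2 hord
end

section
/- Let P = (Σ, s₀, g) be a probabilistic planning problem with Σ = (S, A, γ, Pr), and let P̂ = (Σ̂, s₀, g) be the classical planning problem whose domain Σ̂ is the all-outcomes determinization of Σ. Let φ₁ and φ₂ be conditions. If there is a necessary ordering φ₁ →ₙ φ₂ in P̂ (for all i, in every solution plan of P̂ in which φ₂ is added at time i, φ₁ is true at time i − 1), then there is a necessary ordering φ₁ →ₙ φ₂ in P (for all i, for every policy π and every history σ ∈ H(s₀, π, g) in which φ₂ is added at time i, φ₁ is true at time i − 1). -/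
/-- Necessary ordering `φ1 →ₙ φ2` in the classical problem: for all `i ≥ 1`,
in every solution plan in which `φ2` is added at time `i` (true at `i`, not
at `i - 1`), `φ1` is true at time `i - 1`. -/
def ClassNecessaryOrder {S B : Type*} (Dh : ClassDomain S B) (s0 : S)
    (g φ1 φ2 : S → Prop) : Prop :=
  ∀ plan : List B, SolvesClass Dh s0 g plan →
    ∀ i, 1 ≤ i → i ≤ plan.length →
      TrueAt Dh s0 φ2 plan i → ¬ TrueAt Dh s0 φ2 plan (i - 1) →
        TrueAt Dh s0 φ1 plan (i - 1)

/-- Necessary ordering `φ1 →ₙ φ2` in the probabilistic problem: for all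
`i ≥ 1`, for every policy and every history in `H(s0, π, g)` in which `φ2`
is added at time `i`, `φ1` is true at time `i - 1`. -/
def ProbNecessaryOrder {S A : Type*} (D : ProbDomain S A) (s0 : S)
    (g φ1 φ2 : S → Prop) : Prop :=
  ∀ (pol : Policy D) (σ : List S), InGoalHistories D pol s0 g σ →
    ∀ i, 1 ≤ i → i < σ.length →
      φ2 (σ.getD i s0) → ¬ φ2 (σ.getD (i - 1) s0) →
        φ1 (σ.getD (i - 1) s0)


lemma exists_plan_of_seq {S B : Type*} (Dh : ClassDomain S B) :
    ∀ (t : List S) (s : S),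
    (∀ i (h : i + 1 < (s :: t).length),
        ∃ b, Dh.δ ((s :: t)[i]) b = some ((s :: t)[i + 1])) →
    ∃ plan : List B, plan.length = t.length ∧
      ∀ i (h : i < (s :: t).length),
        execPlan Dh s (plan.take i) = some ((s :: t)[i]) := by
  intro t
  induction t with
  | nil =>
    intro s _
    refine ⟨[], rfl, ?_⟩
    intro i hi
    match i with
    | 0 => simp [execPlan]
  | cons s' t' ih =>
    intro s hstep
    obtain ⟨b, hb⟩ := hstep 0 (by simp)
    obtain ⟨plan', hlen, hex⟩ := ih s' (fun i h => by
      have := hstep (i + 1) (by simpa using Nat.succ_lt_succ h)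
      simpa using this)
    refine ⟨b :: plan', by simpa using hlen, ?_⟩
    intro i hi
    match i with
    | 0 => simp [execPlan]
    | j + 1 =>
      have hj : j < (s' :: t').length := by
        simpa using Nat.lt_of_succ_lt_succ hi
      have := hex j hj
      simp only [List.take_succ_cons, execPlan, List.getElem_cons_succ]
      simp at hb ⊢
      rw [hb]
      simpa using this

/-- A necessary ordering in the all-outcomes determinization
carries over to the probabilistic problem. -/
theorem necessary_order_of_determinization {S A B : Type*}
    [Fintype S] [Fintype A] [Fintype B]
    (D : ProbDomain S A) (Dh : ClassDomain S B) (hdet : IsAllOutcomes D Dh)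
    (s0 : S) (g φ1 φ2 : S → Prop)
    (hord : ClassNecessaryOrder Dh s0 g φ1 φ2) :
    ProbNecessaryOrder D s0 g φ1 φ2 := by
  intro pol σ hσ i h1 hilen hφ2 hnφ2
  obtain ⟨⟨hlen, hhead, hstep, _⟩, hgoal⟩ := hσ
  -- σ is nonempty, its head is s0
  obtain ⟨s, t, rfl⟩ : ∃ s t, σ = s :: t := by
    cases σ with
    | nil => simp at hlen
    | cons a l => exact ⟨a, l, rfl⟩
  have hs : s0 = s := by symm; simpa using hhead
  subst hs
  -- build a deterministic plan realizing σ
  obtain ⟨plan, hplen, hex⟩ := exists_plan_of_seq Dh t s0 (fun j hj => by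
    obtain ⟨a, _, hmem⟩ := hstep j hj
    have hj' : j < (s0 :: t).length := Nat.lt_of_succ_lt hj
    rw [List.getD_eq_getElem _ _ hj', List.getD_eq_getElem _ _ hj] at hmem
    exact hdet.1 _ a _ hmem)
  have hlast : (s0 :: t).length - 1 < (s0 :: t).length := by
    simp
  have hlast' : t.length < (s0 :: t).length := by simp
  have hsolve : SolvesClass Dh s0 g plan := by
    refine ⟨(s0 :: t)[t.length], ?_, ?_⟩
    · have := hex t.length hlast'
      have htake : List.take t.length plan = plan := by
        rw [← hplen]; exact List.take_length
      rwa [htake] at this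
    · have hg := hgoal
      rw [List.getD_eq_getElem _ _ hlast] at hg
      convert hg using 2
      simp
  have hiplen : i ≤ plan.length := by
    have : i < t.length + 1 := by simpa using hilen
    omega
  have hi' : i < (s0 :: t).length := hilen
  have hi1 : i - 1 < (s0 :: t).length := Nat.lt_of_le_of_lt (Nat.sub_le _ _) hi'
  rw [List.getD_eq_getElem _ _ hi'] at hφ2
  rw [List.getD_eq_getElem _ _ hi1] at hnφ2
  rw [List.getD_eq_getElem _ _ hi1]
  have hT2 : TrueAt Dh s0 φ2 plan i := ⟨_, hex i hi', hφ2⟩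
  have hnT2 : ¬ TrueAt Dh s0 φ2 plan (i - 1) := by
    rintro ⟨s, he, hs⟩
    rw [hex (i - 1) hi1] at he
    exact hnφ2 (Option.some.inj he ▸ hs)
  obtain ⟨s, he, hs⟩ := hord plan hsolve i h1 hiplen hT2 hnT2
  rw [hex (i - 1) hi1] at he
  exact Option.some.inj he ▸ hs
end

section
/- Let P = (Σ, s₀, g) be a probabilistic planning problem with Σ = (S, A, γ, Pr), and let P̂ = (Σ̂, s₀, g) be the classical planning problem whose domain Σ̂ is the all-outcomes determinization of Σ. Let φ₁ and φ₂ be conditions. If there is a greedy-necessary ordering φ₁ →_gn φ₂ in P̂ (for all i, in every solution plan of P̂ in which φ₂ is first added at time i, φ₁ is true at time i − 1), then there is a greedy-necessary ordering φ₁ →_gn φ₂ in P (for all i, for every policy π and every history σ ∈ H(s₀, π, g) in which φ₂ is first added at time i, φ₁ is true at time i − 1). -/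
/-- Greedy-necessary ordering `φ1 →_gn φ2` in the classical problem: for all
`i ≥ 1`, in every solution plan in which `φ2` is first added at time `i`
(true at `i`, not at any `j < i`), `φ1` is true at time `i - 1`. -/
def ClassGreedyNecessaryOrder {S B : Type*} (Dh : ClassDomain S B) (s0 : S)
    (g φ1 φ2 : S → Prop) : Prop :=
  ∀ plan : List B, SolvesClass Dh s0 g plan →
    ∀ i, 1 ≤ i → i ≤ plan.length →
      TrueAt Dh s0 φ2 plan i → (∀ j < i, ¬ TrueAt Dh s0 φ2 plan j) →
        TrueAt Dh s0 φ1 plan (i - 1)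

/-- Greedy-necessary ordering `φ1 →_gn φ2` in the probabilistic problem: for
all `i ≥ 1`, for every policy and every history in `H(s0, π, g)` in which
`φ2` is first added at time `i`, `φ1` is true at time `i - 1`. -/
def ProbGreedyNecessaryOrder {S A : Type*} (D : ProbDomain S A) (s0 : S)
    (g φ1 φ2 : S → Prop) : Prop :=
  ∀ (pol : Policy D) (σ : List S), InGoalHistories D pol s0 g σ →
    ∀ i, 1 ≤ i → i < σ.length →
      φ2 (σ.getD i s0) → (∀ j < i, ¬ φ2 (σ.getD j s0)) →
        φ1 (σ.getD (i - 1) s0)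

lemma execPlan_append {S B : Type*} (Dh : ClassDomain S B) (s : S)
    (l l' : List B) :
    execPlan Dh s (l ++ l') = (execPlan Dh s l).bind (fun t => execPlan Dh t l') := by
  induction l generalizing s with
  | nil => simp [execPlan]
  | cons b rest ih =>
    simp only [List.cons_append, execPlan, Option.bind_assoc]
    cases Dh.δ s b with
    | none => simp
    | some t => simp [ih]

/-- A greedy-necessary ordering in the all-outcomes
determinization carries over to the probabilistic problem. -/
theorem greedy_necessary_order_of_determinization {S A B : Type*}
    [Fintype S] [Fintype A] [Fintype B]
    (D : ProbDomain S A) (Dh : ClassDomain S B) (hdet : IsAllOutcomes D Dh)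
    (s0 : S) (g φ1 φ2 : S → Prop)
    (hord : ClassGreedyNecessaryOrder Dh s0 g φ1 φ2) :
    ProbGreedyNecessaryOrder D s0 g φ1 φ2 := by
  intro pol σ hσ i hi1 hilen hφ2 hnot
  obtain ⟨⟨hlen, hstart, hstep, _⟩, hgoal⟩ := hσ
  set n := σ.length - 1 with hn
  -- choose deterministic actions realizing each step
  have hchoose : ∀ k, k < n → ∃ b, Dh.δ (σ.getD k s0) b = some (σ.getD (k+1) s0) := by
    intro k hk
    have hk1 : k + 1 < σ.length := by omega
    obtain ⟨a, _, hmem⟩ := hstep k hk1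
    exact hdet.1 _ _ _ hmem
  classical
  haveI : Nonempty B := ⟨(hchoose 0 (by omega)).choose⟩
  let f : ℕ → B := fun k => if h : k < n then (hchoose k h).choose else Classical.arbitrary B
  let plan : List B := (List.range n).map f
  have hplanlen : plan.length = n := by simp [plan]
  have hexec : ∀ k, k ≤ n → execPlan Dh s0 (plan.take k) = some (σ.getD k s0) := by
    intro k hk
    induction k with
    | zero => simpa [execPlan] using hstart.symm
    | succ m ih =>
      have hm : m < n := by omega
      have hget : plan[m]? = some (f m) := by
        rw [List.getElem?_eq_getElem (by omega)]
        simp [plan]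
      rw [List.take_succ, hget, execPlan_append, ih (by omega)]
      have : f m = (hchoose m hm).choose := by simp [f, hm]
      simp only [execPlan, this, Option.bind_some, Option.bind_fun_some]
      simpa [List.getD, execPlan] using (hchoose m hm).choose_spec
  have hsolve : SolvesClass Dh s0 g plan := by
    refine ⟨σ.getD n s0, ?_, hgoal⟩
    have := hexec n le_rfl
    rwa [List.take_of_length_le (by omega)] at this
  have hin : i ≤ n := by omega
  have hT2 : TrueAt Dh s0 φ2 plan i := ⟨_, hexec i hin, hφ2⟩
  have hTnot : ∀ j < i, ¬ TrueAt Dh s0 φ2 plan j := by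
    intro j hj ⟨s, hs, hφ⟩
    rw [hexec j (by omega)] at hs
    exact hnot j hj (Option.some_injective _ hs ▸ hφ)
  obtain ⟨s, hs, hφ1⟩ := hord plan hsolve i hi1 (by omega) hT2 hTnot
  rw [hexec (i-1) (by omega)] at hs
  exact Option.some_injective _ hs ▸ hφ1
end

section
/- Let Σ = (S, A, γ, Pr) be a probabilistic planning domain, let s₀ be a state, and let ⟨φ₁, …, φ_k⟩ be a sequence of conditions with φ_k ≡ g. Define R₀ = {s₀} and, for i ∈ {1, …, k}, R_i = { σ₋₁ : σ ∈ H(s, π_i, φ_i), s ∈ R_{i-1} }. Suppose that for each i ∈ {1, …, k}, π_i is a policy that is safe for the problem (Σ, s, φ_i) for every state s ∈ R_{i-1}, i.e., Σ_{σ ∈ H(s, π_i, φ_i)} Pr(σ | π_i, s) = 1. Then running π₁, …, π_k in sequence reaches g with probability 1: the sum, over all tuples (σ₁, …, σ_k) with σ₁ ∈ H(s₀, π₁, φ₁) and σ_{i} ∈ H((σ_{i-1})₋₁, π_i, φ_i) for 2 ≤ i ≤ k, of the product Π_{i=1}^{k} Pr(σ_i | π_i, t_{i-1}) — where t₀ =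 s₀ and t_{i-1} = (σ_{i-1})₋₁ for i ≥ 2 — equals 1; moreover every such tuple of histories ends in a state (σ_k)₋₁ satisfying g. -/
/-- The probability `Pr(σ ∣ pol, s0)` of a history: the product of the
transition probabilities along it. -/
noncomputable def histProb {S A : Type*} (D : ProbDomain S A) (pol : Policy D)
    (s0 : S) (σ : List S) : ℝ :=
  ∏ i ∈ Finset.range (σ.length - 1),
    ((pol.act (σ.getD i s0)).elim 0 fun a =>
      D.pr (σ.getD i s0) a (σ.getD (i + 1) s0))

/-- A policy `pol` is safe for the problem `(D, s0, g)`: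
`Σ_{σ ∈ H(s0, pol, g)} Pr(σ ∣ pol, s0) = 1`. -/
def SafePolicy {S A : Type*} (D : ProbDomain S A) (pol : Policy D)
    (s0 : S) (g : S → Prop) : Prop :=
  ∑' σ : {σ : List S // InGoalHistories D pol s0 g σ},
    histProb D pol s0 σ.val = 1

/-- `seqStart s0 σs i` is the state `t_i`: `t_0 = s0` and `t_i` is the
final state of the history `σ_i`. -/
def seqStart {S : Type*} (s0 : S) (σs : ℕ → List S) : ℕ → S
  | 0 => s0
  | i + 1 => (σs (i + 1)).getD ((σs (i + 1)).length - 1) (seqStart s0 σs i)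

/-- `reachSet D pols φs s0 i` is the set `R_i`: `R_0 = {s0}` and `R_i` is
the set of final states of histories of `π_i` for `φ_i` from states of
`R_{i-1}`. -/
def reachSet {S A : Type*} (D : ProbDomain S A) (pols : ℕ → Policy D)
    (φs : ℕ → S → Prop) (s0 : S) : ℕ → Set S
  | 0 => {s0}
  | i + 1 => {t | ∃ s ∈ reachSet D pols φs s0 i, ∃ σ : List S,
      InGoalHistories D (pols (i + 1)) s (φs (i + 1)) σ ∧
        σ.getD (σ.length - 1) s = t}

/-- `σs` encodes a tuple `(σ₁, …, σ_k)` with `σ₁ ∈ H(s0, π₁, φ₁)` and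
`σ_i ∈ H((σ_{i-1})₋₁, π_i, φ_i)` for `2 ≤ i ≤ k` (coordinates outside
`{1, …, k}` are fixed to `[]`). -/
def SeqTuple {S A : Type*} (D : ProbDomain S A) (pols : ℕ → Policy D)
    (φs : ℕ → S → Prop) (s0 : S) (k : ℕ) (σs : ℕ → List S) : Prop :=
  (∀ i, 1 ≤ i → i ≤ k →
    InGoalHistories D (pols i) (seqStart s0 σs (i - 1)) (φs i) (σs i)) ∧
  (∀ i, i = 0 ∨ k < i → σs i = [])

/-- The product `Π_{i=1}^{k} Pr(σ_i ∣ π_i, t_{i-1})`. -/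
noncomputable def tupleProb {S A : Type*} (D : ProbDomain S A)
    (pols : ℕ → Policy D) (s0 : S) (k : ℕ) (σs : ℕ → List S) : ℝ :=
  ∏ i ∈ Finset.Icc 1 k, histProb D (pols i) (seqStart s0 σs (i - 1)) (σs i)

section Aux
variable {S A : Type*}

lemma histProb_nonneg (D : ProbDomain S A) (pol : Policy D) (s0 : S) {g : S → Prop}
    {σ : List S} (h : IsHistory D pol s0 g σ) : 0 ≤ histProb D pol s0 σ := by
  apply Finset.prod_nonneg
  intro i hi
  rw [Finset.mem_range] at hi
  have h1 := h.1
  have hlt : i + 1 < σ.length := by omega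
  obtain ⟨a, ha, hm⟩ := h.2.2.1 i hlt
  rw [ha]
  exact D.pr_nonneg _ _ _ hm

lemma tupleProb_nonneg (D : ProbDomain S A) (pols : ℕ → Policy D)
    (φs : ℕ → S → Prop) (s0 : S) (k : ℕ) (σs : ℕ → List S)
    (h : SeqTuple D pols φs s0 k σs) : 0 ≤ tupleProb D pols s0 k σs := by
  apply Finset.prod_nonneg
  intro i hi
  rw [Finset.mem_Icc] at hi
  exact histProb_nonneg D (pols i) _ (h.1 i hi.1 hi.2).1

lemma seqStart_congr (s0 : S) (σs σs' : ℕ → List S) :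
    ∀ i, (∀ j, 1 ≤ j → j ≤ i → σs j = σs' j) → seqStart s0 σs i = seqStart s0 σs' i
  | 0, _ => rfl
  | i + 1, h => by
    simp only [seqStart]
    rw [h (i + 1) (by omega) le_rfl,
      seqStart_congr s0 σs σs' i fun j h1 h2 => h j h1 (by omega)]

lemma seqStart_mem_reach (D : ProbDomain S A) (pols : ℕ → Policy D)
    (φs : ℕ → S → Prop) (s0 : S) (k : ℕ) (σs : ℕ → List S)
    (h : SeqTuple D pols φs s0 k σs) :
    ∀ i, i ≤ k → seqStart s0 σs i ∈ reachSet D pols φs s0 i := by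
  intro i
  induction i with
  | zero => intro _; exact rfl
  | succ n ih =>
    intro hik
    refine ⟨seqStart s0 σs n, ih (by omega), σs (n + 1), ?_, rfl⟩
    exact h.1 (n + 1) (by omega) hik

lemma summable_of_tsum_eq_one {ι : Type*} (f : ι → ℝ) (h : ∑' i, f i = 1) :
    Summable f := by
  by_contra hs
  rw [tsum_eq_zero_of_not_summable hs] at h
  norm_num at h

end Aux

section Base
variable {S A : Type*}

def baseFun (σ : List S) : ℕ → List S := fun i => if i = 1 then σ else []

def baseEquiv (D : ProbDomain S A) (pols : ℕ → Policy D) (φs : ℕ → S → Prop)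
    (s0 : S) :
    {σ : List S // InGoalHistories D (pols 1) s0 (φs 1) σ} ≃
    {σs : ℕ → List S // SeqTuple D pols φs s0 1 σs} where
  toFun σ := ⟨baseFun σ.val, by
    constructor
    · intro i h1 h2
      have hi : i = 1 := le_antisymm h2 h1
      subst hi
      exact σ.prop
    · intro i hi
      have : i ≠ 1 := by omega
      simp [baseFun, this]⟩
  invFun σs := ⟨σs.val 1, σs.prop.1 1 le_rfl le_rfl⟩
  left_inv σ := by apply Subtype.ext; simp [baseFun]
  right_inv σs := by
    apply Subtype.ext; funext i
    by_cases hi : i = 1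
    · simp [baseFun, hi]
    · simp [baseFun, hi, σs.prop.2 i (by omega)]

lemma tupleProb_baseFun (D : ProbDomain S A) (pols : ℕ → Policy D) (s0 : S)
    (σ : List S) :
    tupleProb D pols s0 1 (baseFun σ) = histProb D (pols 1) s0 σ := by
  rw [tupleProb, Finset.Icc_self, Finset.prod_singleton]
  rfl

end Base

section Step
variable {S A : Type*}

def stepFun (k : ℕ) (σs : ℕ → List S) (σ : List S) : ℕ → List S :=
  fun i => if i = k + 1 then σ else σs i

lemma seqStart_stepFun (s0 : S) (k : ℕ) (σs : ℕ → List S) (σ : List S)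
    (i : ℕ) (hi : i ≤ k) :
    seqStart s0 (stepFun k σs σ) i = seqStart s0 σs i :=
  seqStart_congr s0 _ _ i fun j _ hj => by
    simp [stepFun, show j ≠ k + 1 by omega]

lemma seqTuple_stepFun (D : ProbDomain S A) (pols : ℕ → Policy D)
    (φs : ℕ → S → Prop) (s0 : S) (k : ℕ) (σs : ℕ → List S) (σ : List S)
    (ht : SeqTuple D pols φs s0 k σs)
    (hσ : InGoalHistories D (pols (k + 1)) (seqStart s0 σs k) (φs (k + 1)) σ) :
    SeqTuple D pols φs s0 (k + 1) (stepFun k σs σ) := by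
  constructor
  · intro i h1 h2
    rcases Nat.lt_or_ge i (k + 1) with h | h
    · have hik : i ≤ k := by omega
      have e1 : stepFun k σs σ i = σs i := by
        simp [stepFun, show i ≠ k + 1 by omega]
      have e2 : seqStart s0 (stepFun k σs σ) (i - 1) = seqStart s0 σs (i - 1) :=
        seqStart_stepFun s0 k σs σ _ (by omega)
      rw [e1, e2]
      exact ht.1 i h1 hik
    · have hik : i = k + 1 := by omega
      subst hik
      have e1 : stepFun k σs σ (k + 1) = σ := by simp [stepFun]
      have e2 : seqStart s0 (stepFun k σs σ) (k + 1 - 1) = seqStart s0 σs k :=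
        seqStart_stepFun s0 k σs σ k le_rfl
      rw [e1, e2]
      exact hσ
  · intro i hi
    have h1 : i ≠ k + 1 := by omega
    rcases hi with h | h
    · simp [stepFun, h1, ht.2 i (Or.inl h)]
    · simp [stepFun, h1, ht.2 i (Or.inr (by omega))]

lemma tupleProb_stepFun (D : ProbDomain S A) (pols : ℕ → Policy D) (s0 : S)
    (k : ℕ) (σs : ℕ → List S) (σ : List S) :
    tupleProb D pols s0 (k + 1) (stepFun k σs σ) =
      tupleProb D pols s0 k σs *
        histProb D (pols (k + 1)) (seqStart s0 σs k) σ := by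
  simp only [tupleProb]
  rw [Finset.prod_Icc_succ_top (by omega : 1 ≤ k + 1)]
  congr 1
  · apply Finset.prod_congr rfl
    intro i hi
    rw [Finset.mem_Icc] at hi
    rw [show stepFun k σs σ i = σs i from by
        simp [stepFun, show i ≠ k + 1 by omega],
      seqStart_stepFun s0 k σs σ (i - 1) (by omega)]
  · rw [show stepFun k σs σ (k + 1) = σ from by simp [stepFun],
      show k + 1 - 1 = k from rfl, seqStart_stepFun s0 k σs σ k le_rfl]

end Step

lemma main_lemma {S A : Type*} (D : ProbDomain S A) (s0 : S)
    (φs : ℕ → S → Prop) (pols : ℕ → Policy D) (k : ℕ) (hk : 1 ≤ k) :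
    (∀ i, 1 ≤ i → i ≤ k → ∀ s ∈ reachSet D pols φs s0 (i - 1),
      SafePolicy D (pols i) s (φs i)) →
    Summable (fun t : {σs : ℕ → List S // SeqTuple D pols φs s0 k σs} =>
      tupleProb D pols s0 k t.val) ∧
    (∑' t : {σs : ℕ → List S // SeqTuple D pols φs s0 k σs},
      tupleProb D pols s0 k t.val) = 1 := by
  induction k, hk using Nat.le_induction with
  | base =>
    intro hsafe
    have hsf : SafePolicy D (pols 1) s0 (φs 1) := hsafe 1 le_rfl le_rfl s0 rfl
    have hsum : Summable (fun σ : {σ : List S // InGoalHistories D (pols 1) s0 (φs 1) σ} =>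
        histProb D (pols 1) s0 σ.val) := summable_of_tsum_eq_one _ hsf
    set e := baseEquiv D pols φs s0 with he
    have hcomp : (fun t : {σs : ℕ → List S // SeqTuple D pols φs s0 1 σs} =>
        tupleProb D pols s0 1 t.val) ∘ e =
        fun σ : {σ : List S // InGoalHistories D (pols 1) s0 (φs 1) σ} =>
          histProb D (pols 1) s0 σ.val := by
      funext σ
      simp only [Function.comp_apply, he, baseEquiv]
      exact tupleProb_baseFun D pols s0 σ.val
    constructor
    · exact (Equiv.summable_iff e).mp (hcomp ▸ hsum)
    · rw [← Equiv.tsum_eq e]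
      calc (∑' σ : {σ : List S // InGoalHistories D (pols 1) s0 (φs 1) σ},
              tupleProb D pols s0 1 (e σ).val)
          = ∑' σ : {σ : List S // InGoalHistories D (pols 1) s0 (φs 1) σ},
              histProb D (pols 1) s0 σ.val := tsum_congr fun σ => congrFun hcomp σ
        _ = 1 := hsf
  | succ k hk ih =>
    intro hsafe
    obtain ⟨ihsm, ihts⟩ := ih fun i h1 h2 s hs => hsafe i h1 (by omega) s hs
    set T := {σs : ℕ → List S // SeqTuple D pols φs s0 k σs} with hT
    have hsafe' : ∀ t : T,
        SafePolicy D (pols (k + 1)) (seqStart s0 t.val k) (φs (k + 1)) := by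
      intro t
      apply hsafe (k + 1) (by omega) le_rfl
      exact seqStart_mem_reach D pols φs s0 k t.val t.prop k le_rfl
    -- forward map into tuples of length k+1
    set f : (Σ t : T, {σ : List S //
        InGoalHistories D (pols (k + 1)) (seqStart s0 t.val k) (φs (k + 1)) σ}) →
        {σs : ℕ → List S // SeqTuple D pols φs s0 (k + 1) σs} :=
      fun p => ⟨stepFun k p.1.val p.2.val,
        seqTuple_stepFun D pols φs s0 k p.1.val p.2.val p.1.prop p.2.prop⟩ with hf
    have hinj : Function.Injective f := by
      rintro ⟨⟨t, ht⟩, ⟨σ, hσ⟩⟩ ⟨⟨t', ht'⟩, ⟨σ', hσ'⟩⟩ h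
      have hv : stepFun k t σ = stepFun k t' σ' := congrArg Subtype.val h
      have htt : t = t' := by
        funext i
        by_cases hik : i = k + 1
        · subst hik
          rw [ht.2 (k + 1) (Or.inr (by omega)), ht'.2 (k + 1) (Or.inr (by omega))]
        · have := congrFun hv i
          simpa [stepFun, hik] using this
      subst htt
      have hσσ : σ = σ' := by
        have := congrFun hv (k + 1)
        simpa [stepFun] using this
      subst hσσ
      rfl
    have hsurj : Function.Surjective f := by
      rintro ⟨σs, hσs⟩
      have hres : SeqTuple D pols φs s0 k (fun i => if i ≤ k then σs i else []) := by
        constructor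
        · intro i h1 h2
          have e1 : (fun i => if i ≤ k then σs i else []) i = σs i := by simp [h2]
          have e2 : seqStart s0 (fun i => if i ≤ k then σs i else []) (i - 1) =
              seqStart s0 σs (i - 1) :=
            seqStart_congr _ _ _ _ fun j hj1 hj2 => by simp [show j ≤ k by omega]
          rw [e1, e2]
          exact hσs.1 i h1 (by omega)
        · intro i hi
          rcases hi with h | h
          · subst h; simp [hσs.2 0 (Or.inl rfl)]
          · simp [show ¬ i ≤ k by omega]
      have hlast : InGoalHistories D (pols (k + 1))
          (seqStart s0 (fun i => if i ≤ k then σs i else []) k) (φs (k + 1))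
          (σs (k + 1)) := by
        have e2 : seqStart s0 (fun i => if i ≤ k then σs i else []) k =
            seqStart s0 σs k :=
          seqStart_congr _ _ _ _ fun j hj1 hj2 => by simp [hj2]
        rw [e2]
        exact hσs.1 (k + 1) (by omega) le_rfl
      refine ⟨⟨⟨_, hres⟩, ⟨σs (k + 1), hlast⟩⟩, ?_⟩
      apply Subtype.ext
      funext i
      by_cases hik : i = k + 1
      · simp [hf, stepFun, hik]
      · by_cases hik2 : i ≤ k
        · simp [hf, stepFun, hik, hik2]
        · simp [hf, stepFun, hik, hik2, hσs.2 i (Or.inr (by omega))]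
    set e := Equiv.ofBijective f ⟨hinj, hsurj⟩ with he
    set F : (Σ t : T, {σ : List S //
        InGoalHistories D (pols (k + 1)) (seqStart s0 t.val k) (φs (k + 1)) σ}) → ℝ :=
      fun p => tupleProb D pols s0 (k + 1) (f p).val with hF
    have hFval : ∀ p, F p = tupleProb D pols s0 k p.1.val *
        histProb D (pols (k + 1)) (seqStart s0 p.1.val k) p.2.val := by
      intro p
      simp only [hF, hf]
      exact tupleProb_stepFun D pols s0 k p.1.val p.2.val
    have hFnonneg : ∀ p, 0 ≤ F p := fun p =>
      tupleProb_nonneg D pols φs s0 (k + 1) _ (f p).prop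
    have hinner : ∀ t : T, Summable (fun σ : {σ : List S //
        InGoalHistories D (pols (k + 1)) (seqStart s0 t.val k) (φs (k + 1)) σ} =>
        F ⟨t, σ⟩) := by
      intro t
      have : Summable (fun σ : {σ : List S //
          InGoalHistories D (pols (k + 1)) (seqStart s0 t.val k) (φs (k + 1)) σ} =>
          histProb D (pols (k + 1)) (seqStart s0 t.val k) σ.val) :=
        summable_of_tsum_eq_one _ (hsafe' t)
      simpa only [hFval] using this.mul_left (tupleProb D pols s0 k t.val)
    have hinnersum : ∀ t : T, (∑' σ : {σ : List S //
        InGoalHistories D (pols (k + 1)) (seqStart s0 t.val k) (φs (k + 1)) σ},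
        F ⟨t, σ⟩) = tupleProb D pols s0 k t.val := by
      intro t
      simp only [hFval]
      rw [tsum_mul_left, hsafe' t, mul_one]
    have houter : Summable (fun t : T => ∑' σ : {σ : List S //
        InGoalHistories D (pols (k + 1)) (seqStart s0 t.val k) (φs (k + 1)) σ},
        F ⟨t, σ⟩) := by
      simpa only [hinnersum] using ihsm
    have hFsum : Summable F :=
      (summable_sigma_of_nonneg hFnonneg).mpr ⟨hinner, houter⟩
    have htsF : ∑' p, F p = 1 := by
      rw [Summable.tsum_sigma hFsum]
      calc (∑' t : T, ∑' σ, F ⟨t, σ⟩) = ∑' t : T, tupleProb D pols s0 k t.val :=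
            tsum_congr hinnersum
        _ = 1 := ihts
    constructor
    · exact (Equiv.summable_iff e).mp hFsum
    · rw [← Equiv.tsum_eq e]
      exact htsF


/-- If each policy `π_i` is safe for `(Σ, s, φ_i)` for every
`s ∈ R_{i-1}`, then running `π₁, …, π_k` in sequence reaches `g ≡ φ_k` with
probability 1: the sum over all tuples `(σ₁, …, σ_k)` of histories of the
product of their probabilities equals 1, and every such tuple ends in a state
satisfying `g`. -/
theorem sequential_policies_safe {S A : Type*} [Fintype S] [Fintype A]
    (D : ProbDomain S A) (s0 : S) (g : S → Prop) (k : ℕ) (hk : 1 ≤ k)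
    (φs : ℕ → S → Prop) (hgoal : ∀ s, φs k s ↔ g s)
    (pols : ℕ → Policy D)
    (hsafe : ∀ i, 1 ≤ i → i ≤ k → ∀ s ∈ reachSet D pols φs s0 (i - 1),
      SafePolicy D (pols i) s (φs i)) :
    (∑' t : {σs : ℕ → List S // SeqTuple D pols φs s0 k σs},
        tupleProb D pols s0 k t.val) = 1 ∧
    (∀ σs : ℕ → List S, SeqTuple D pols φs s0 k σs →
      g (seqStart s0 σs k)) := by
  refine ⟨(main_lemma D s0 φs pols k hk hsafe).2, ?_⟩
  intro σs hσs
  obtain ⟨m, rfl⟩ : ∃ m, k = m + 1 := ⟨k - 1, by omega⟩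
  rw [← hgoal]
  exact (hσs.1 (m + 1) (by omega) le_rfl).2
end
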